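/- Let G be a simple mixed graph on n vertices, let u₀, v₀ be vertices with A u₀ v₀ = 1, and let H be the simple mixed graph with the same edge-multiplicity function E and with arc-multiplicity function A' agreeing with A everywhere except A' u₀ v₀ = 0 (i.e., H = G − a for the arc a from u₀ to v₀). Then 0 = ν₂ₙ(H) = ν₂ₙ(G), and for every i = 1, …, 2n−1 one has ν_{i+1}(G) ≤ ν_i(H) ≤ ν_i(G). -/

import Mathlib

set_option linter.unusedSectionVars false

open Matrix Finset Polynomial

variable {V : Type*} [Fintype V] [DecidableEq V]

/-- Undirected adjacency matrix of the mixed graph with edge-multiplicity function `E`: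
`(u,v)`-entry `E u v` for `u ≠ v`, and `(v,v)`-entry `2 * E v v`. -/
def Au (E : V → V → ℕ) : Matrix V V ℝ :=
  Matrix.of fun u v => if u = v then ((2 * E v v : ℕ) : ℝ) else ((E u v : ℕ) : ℝ)

/-- Arc matrix of the mixed graph with arc-multiplicity function `A`. -/
def Bm (A : V → V → ℕ) : Matrix V V ℝ := Matrix.of fun u v => ((A u v : ℕ) : ℝ)

/-- Undirected degree `d v`. -/
def dU (E : V → V → ℕ) (v : V) : ℕ :=
  (∑ u ∈ Finset.univ.filter (fun u => u ≠ v), E v u) + 2 * E v v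

/-- Out-degree `d⁺ v`. -/
def dOut (A : V → V → ℕ) (v : V) : ℕ := ∑ u, A v u

/-- In-degree `d⁻ v`. -/
def dIn (A : V → V → ℕ) (v : V) : ℕ := ∑ u, A u v

/-- Integrated adjacency matrix `𝓘(G) = [[Aᵤ, B], [Bᵀ, Aᵤ]]`. -/
def intAdj (E A : V → V → ℕ) : Matrix (V ⊕ V) (V ⊕ V) ℝ :=
  Matrix.fromBlocks (Au E) (Bm A) (Bm A)ᵀ (Au E)

/-- Integrated degree matrix `𝓘ᴰ(G)`. -/
def intDeg (E A : V → V → ℕ) : Matrix (V ⊕ V) (V ⊕ V) ℝ :=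
  Matrix.diagonal (Sum.elim (fun v => ((dU E v + dOut A v : ℕ) : ℝ))
    (fun v => ((dU E v + dIn A v : ℕ) : ℝ)))

/-- Integrated Laplacian matrix `𝓘ᴸ(G) = 𝓘ᴰ(G) - 𝓘(G)`. -/
def intLap (E A : V → V → ℕ) : Matrix (V ⊕ V) (V ⊕ V) ℝ := intDeg E A - intAdj E A

/-- Integrated signless Laplacian matrix `𝓘Q(G) = 𝓘ᴰ(G) + 𝓘(G)`. -/
def intQ (E A : V → V → ℕ) : Matrix (V ⊕ V) (V ⊕ V) ℝ := intDeg E A + intAdj E A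

/-- A mixed graph is simple: multiplicities at most 1, no loops, no directed loops. -/
def IsSimple (E A : V → V → ℕ) : Prop :=
  (∀ u v, E u v ≤ 1) ∧ (∀ u v, A u v ≤ 1) ∧ (∀ v, E v v = 0) ∧ (∀ v, A v v = 0)

/-- Number of edges (excluding loops): `e(G) = (1/2)·Σ_{u ≠ v} E u v`. -/
noncomputable def numEdges (E : V → V → ℕ) : ℝ :=
  (∑ u, ∑ v ∈ Finset.univ.filter (fun v => v ≠ u), (E u v : ℝ)) / 2

/-- Number of loops: `l(G) = Σ_v E v v`. -/
noncomputable def numLoops (E : V → V → ℕ) : ℝ := ∑ v, (E v v : ℝ)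

/-- Number of arcs (including directed loops): `a(G) = Σ_{u,v} A u v`. -/
noncomputable def numArcs (A : V → V → ℕ) : ℝ := ∑ u, ∑ v, (A u v : ℝ)

lemma intAdj_isHermitian (E A : V → V → ℕ) (hE : ∀ u v, E u v = E v u) :
    (intAdj E A).IsHermitian := by
  have hAu : (Au E)ᵀ = Au E := by
    ext u v
    by_cases h : u = v
    · subst h; rfl
    · simp [Au, Matrix.transpose_apply, h, Ne.symm h, hE u v]
  show (intAdj E A)ᴴ = intAdj E A
  rw [Matrix.conjTranspose_eq_transpose_of_trivial]
  unfold intAdj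
  rw [Matrix.fromBlocks_transpose, hAu, Matrix.transpose_transpose]

lemma intLap_isHermitian (E A : V → V → ℕ) (hE : ∀ u v, E u v = E v u) :
    (intLap E A).IsHermitian :=
  (Matrix.isHermitian_diagonal _).sub (intAdj_isHermitian E A hE)

lemma intQ_isHermitian (E A : V → V → ℕ) (hE : ∀ u v, E u v = E v u) :
    (intQ E A).IsHermitian :=
  (Matrix.isHermitian_diagonal _).add (intAdj_isHermitian E A hE)

/-- The non-increasing rearrangement of a finite tuple of reals. -/
noncomputable def sortDesc {N : ℕ} (f : Fin N → ℝ) : Fin N → ℝ :=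
  fun i => (f ∘ Tuple.sort f) i.rev

/-- The eigenvalues of the integrated Laplacian matrix `𝓘ᴸ(G)`, in non-increasing order:
`nuT E A hE i` is `ν_{i+1}(G)` (0-indexed). -/
noncomputable def nuT {n : ℕ} (E A : Fin n → Fin n → ℕ) (hE : ∀ u v, E u v = E v u) :
    Fin (n + n) → ℝ :=
  sortDesc (fun i => (intLap_isHermitian E A hE).eigenvalues (finSumFinEquiv.symm i))

/-- The eigenvalues of the integrated signless Laplacian matrix `𝓘Q(G)`, in non-increasing
order: `xiT E A hE i` is `ξ_{i+1}(G)` (0-indexed). -/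
noncomputable def xiT {n : ℕ} (E A : Fin n → Fin n → ℕ) (hE : ∀ u v, E u v = E v u) :
    Fin (n + n) → ℝ :=
  sortDesc (fun i => (intQ_isHermitian E A hE).eigenvalues (finSumFinEquiv.symm i))

/-- The eigenvalues of the integrated adjacency matrix `𝓘(G)`, in non-increasing order:
`lamT E A hE i` is `λ_{i+1}(G)` (0-indexed). -/
noncomputable def lamT {n : ℕ} (E A : Fin n → Fin n → ℕ) (hE : ∀ u v, E u v = E v u) :
    Fin (n + n) → ℝ :=
  sortDesc (fun i => (intAdj_isHermitian E A hE).eigenvalues (finSumFinEquiv.symm i))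

/-! `𝓘ᴸ(G) = diag(𝓘(G) 𝟙) - 𝓘(G)` is the Laplacian of a symmetric matrix with nonnegative
entries, so `xᵀ 𝓘ᴸ(G) x = ½ ∑ᵤᵥ 𝓘(G)ᵤᵥ (xᵤ - xᵥ)² ≥ 0` and `𝓘ᴸ(G) 𝟙 = 0`; hence the smallest
eigenvalue is `0`. Deleting the arc `u₀ → v₀` subtracts the rank-one matrix `w wᵀ`, where
`w = e_{u₀} - e_{v₀'}` and `v₀'` is the second copy of `v₀`. Interlacing under such a perturbation
is Courant–Fischer: a nonzero vector in the intersection of two eigenvector spans (and, for the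
lower bound, of `w^⊥`, on which both quadratic forms agree) compares the two eigenvalues. -/

open Module WithLp

section FiniteDimensional

variable {K U : Type*} [Field K] [AddCommGroup U] [Module K U] [FiniteDimensional K U]

lemma Submodule.finrank_add_le_finrank_add_finrank_inf (S T : Submodule K U) :
    finrank K S + finrank K T ≤ finrank K U + finrank K ↥(S ⊓ T) := by
  have := Submodule.finrank_sup_add_finrank_inf_eq S T
  have := Submodule.finrank_le (S ⊔ T)
  omega

lemma Submodule.exists_ne_zero_mem_inf_of_finrank_add_lt {S T : Submodule K U}
    (h : finrank K U < finrank K S + finrank K T) : ∃ x ∈ S ⊓ T, x ≠ 0 := by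
  refine Submodule.exists_mem_ne_zero_of_ne_bot fun hbot => ?_
  have := S.finrank_add_le_finrank_add_finrank_inf T
  rw [hbot, finrank_bot] at this
  omega

end FiniteDimensional

section Eigenvectors

variable {ι : Type*} [Fintype ι] [DecidableEq ι] {M : Matrix ι ι ℝ}

noncomputable def quadForm (M : Matrix ι ι ℝ) (x : EuclideanSpace ℝ ι) : ℝ :=
  ofLp x ⬝ᵥ M *ᵥ ofLp x

lemma Matrix.IsHermitian.quadForm_eq_sum (hM : M.IsHermitian) (x : EuclideanSpace ℝ ι) :
    quadForm M x = ∑ i, hM.eigenvalues i * hM.eigenvectorBasis.repr x i ^ 2 := by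
  have hrepr : ∀ i, hM.eigenvectorBasis.repr (toLp 2 (M *ᵥ ofLp x)) i
      = hM.eigenvalues i * hM.eigenvectorBasis.repr x i := by
    intro i
    have hT : Mᵀ = M := by simpa using hM.eq
    simp only [OrthonormalBasis.repr_apply_apply, EuclideanSpace.inner_eq_star_dotProduct,
      star_trivial]
    rw [dotProduct_comm, dotProduct_mulVec, ← mulVec_transpose, hT, hM.mulVec_eigenvectorBasis,
      smul_dotProduct, smul_eq_mul]
    exact congrArg _ (dotProduct_comm _ _)
  calc quadForm M x = inner ℝ x (toLp 2 (M *ᵥ ofLp x)) := by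
        simp [quadForm, EuclideanSpace.inner_eq_star_dotProduct, dotProduct_comm]
    _ = ∑ i, hM.eigenvectorBasis.repr x i
          * hM.eigenvectorBasis.repr (toLp 2 (M *ᵥ ofLp x)) i := by
        rw [← hM.eigenvectorBasis.repr.inner_map_map, PiLp.inner_apply]
        simp [mul_comm]
    _ = _ := by
        simp only [hrepr]; congr 1; ext i; ring

lemma Matrix.IsHermitian.norm_sq_eq_sum (hM : M.IsHermitian) (x : EuclideanSpace ℝ ι) :
    ‖x‖ ^ 2 = ∑ i, hM.eigenvectorBasis.repr x i ^ 2 := by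
  rw [← hM.eigenvectorBasis.repr.norm_map, EuclideanSpace.norm_sq_eq]
  simp

noncomputable def Matrix.IsHermitian.eigenvectorSpan (hM : M.IsHermitian) (s : Finset ι) :
    Submodule ℝ (EuclideanSpace ℝ ι) :=
  Submodule.span ℝ (Set.range fun i : s => hM.eigenvectorBasis i)

lemma Matrix.IsHermitian.finrank_eigenvectorSpan (hM : M.IsHermitian) (s : Finset ι) :
    finrank ℝ (hM.eigenvectorSpan s) = s.card :=
  (finrank_span_eq_card (hM.eigenvectorBasis.orthonormal.linearIndependent.comp _
    Subtype.val_injective)).trans (Fintype.card_coe s)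

lemma Matrix.IsHermitian.repr_eq_zero_of_mem_eigenvectorSpan (hM : M.IsHermitian) {s : Finset ι}
    {x : EuclideanSpace ℝ ι} (hx : x ∈ hM.eigenvectorSpan s) {i : ι} (hi : i ∉ s) :
    hM.eigenvectorBasis.repr x i = 0 := by
  induction hx using Submodule.span_induction with
  | mem y hy =>
    obtain ⟨⟨j, hj⟩, rfl⟩ := hy
    simp [OrthonormalBasis.repr_self, show i ≠ j by rintro rfl; exact hi hj]
  | zero => simp
  | add y z _ _ hy hz => simp [hy, hz]
  | smul c y _ hy => simp [hy]

lemma Matrix.IsHermitian.le_quadForm_of_mem_eigenvectorSpan (hM : M.IsHermitian) {s : Finset ι}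
    {c : ℝ} (hc : ∀ i ∈ s, c ≤ hM.eigenvalues i) {x : EuclideanSpace ℝ ι}
    (hx : x ∈ hM.eigenvectorSpan s) : c * ‖x‖ ^ 2 ≤ quadForm M x := by
  rw [hM.quadForm_eq_sum, hM.norm_sq_eq_sum, Finset.mul_sum]
  refine Finset.sum_le_sum fun i _ => ?_
  by_cases hi : i ∈ s
  · exact mul_le_mul_of_nonneg_right (hc i hi) (sq_nonneg _)
  · simp [hM.repr_eq_zero_of_mem_eigenvectorSpan hx hi]

lemma Matrix.IsHermitian.quadForm_le_of_mem_eigenvectorSpan (hM : M.IsHermitian) {s : Finset ι}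
    {c : ℝ} (hc : ∀ i ∈ s, hM.eigenvalues i ≤ c) {x : EuclideanSpace ℝ ι}
    (hx : x ∈ hM.eigenvectorSpan s) : quadForm M x ≤ c * ‖x‖ ^ 2 := by
  rw [hM.quadForm_eq_sum, hM.norm_sq_eq_sum, Finset.mul_sum]
  refine Finset.sum_le_sum fun i _ => ?_
  by_cases hi : i ∈ s
  · exact mul_le_mul_of_nonneg_right (hc i hi) (sq_nonneg _)
  · simp [hM.repr_eq_zero_of_mem_eigenvectorSpan hx hi]

lemma Matrix.IsHermitian.exists_eigenvalues_eq_zero (hM : M.IsHermitian)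
    {v : ι → ℝ} (hv : v ≠ 0) (hMv : M *ᵥ v = 0) : ∃ i, hM.eigenvalues i = 0 := by
  have hdet : M.det = 0 := Matrix.exists_mulVec_eq_zero_iff.1 ⟨v, hv, hMv⟩
  rw [hM.det_eq_prod_eigenvalues] at hdet
  obtain ⟨i, -, hi⟩ := Finset.prod_eq_zero_iff.1 hdet
  exact ⟨i, by exact_mod_cast hi⟩

/-- The dimension count behind the Courant–Fischer min-max principle. -/
lemma le_of_quadForm_le_on {A B : Matrix ι ι ℝ} (hA : A.IsHermitian) (hB : B.IsHermitian)
    {W : Submodule ℝ (EuclideanSpace ℝ ι)} (hW : ∀ x ∈ W, quadForm A x ≤ quadForm B x)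
    {s t : Finset ι} {c d : ℝ} (hs : ∀ i ∈ s, c ≤ hA.eigenvalues i)
    (ht : ∀ i ∈ t, hB.eigenvalues i ≤ d)
    (hcard : 2 * Fintype.card ι < s.card + t.card + finrank ℝ W) : c ≤ d := by
  have hST := (hA.eigenvectorSpan s).finrank_add_le_finrank_add_finrank_inf (hB.eigenvectorSpan t)
  rw [hA.finrank_eigenvectorSpan, hB.finrank_eigenvectorSpan, finrank_euclideanSpace] at hST
  obtain ⟨x, hx, hx0⟩ := Submodule.exists_ne_zero_mem_inf_of_finrank_add_lt
    (S := hA.eigenvectorSpan s ⊓ hB.eigenvectorSpan t) (T := W)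
    (by rw [finrank_euclideanSpace]; omega)
  simp only [Submodule.mem_inf] at hx
  obtain ⟨⟨hxA, hxB⟩, hxW⟩ := hx
  refine le_of_mul_le_mul_right ?_ (by positivity : 0 < ‖x‖ ^ 2)
  calc c * ‖x‖ ^ 2 ≤ quadForm A x := hA.le_quadForm_of_mem_eigenvectorSpan hs hxA
    _ ≤ quadForm B x := hW x hxW
    _ ≤ d * ‖x‖ ^ 2 := hB.quadForm_le_of_mem_eigenvectorSpan ht hxB

lemma quadForm_add_vecMulVec (A : Matrix ι ι ℝ) (w : ι → ℝ) (x : EuclideanSpace ℝ ι) :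
    quadForm (A + vecMulVec w w) x = quadForm A x + (w ⬝ᵥ ofLp x) ^ 2 := by
  simp only [quadForm, add_mulVec, dotProduct_add, vecMulVec_mulVec, op_smul_eq_smul,
    dotProduct_smul, smul_eq_mul, dotProduct_comm (ofLp x) w, sq]

lemma finrank_orthogonal_span_singleton_ge (v : EuclideanSpace ℝ ι) :
    Fintype.card ι - 1 ≤ finrank ℝ (ℝ ∙ v)ᗮ := by
  have h := (ℝ ∙ v).finrank_add_finrank_orthogonal
  have h1 : finrank ℝ (ℝ ∙ v) ≤ 1 := by simpa using finrank_span_le_card (R := ℝ) {v}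
  rw [finrank_euclideanSpace] at h
  omega

end Eigenvectors

section SortDesc

variable {N : ℕ}

lemma le_card_filter_sortDesc_le (f : Fin N → ℝ) (i : Fin N) :
    i.val + 1 ≤ #{j | sortDesc f i ≤ f j} := by
  calc i.val + 1 = #((Finset.Ici i.rev).image (Tuple.sort f)) := by
        rw [card_image_of_injective _ (Equiv.injective _), Fin.card_Ici, Fin.val_rev]; omega
    _ ≤ _ := card_le_card fun j hj => by
        obtain ⟨k, hk, rfl⟩ := mem_image.1 hj
        exact mem_filter.2 ⟨mem_univ _, Tuple.monotone_sort f (mem_Ici.1 hk)⟩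

lemma le_card_filter_le_sortDesc (f : Fin N → ℝ) (i : Fin N) :
    N - i.val ≤ #{j | f j ≤ sortDesc f i} := by
  calc N - i.val = #((Finset.Iic i.rev).image (Tuple.sort f)) := by
        rw [card_image_of_injective _ (Equiv.injective _), Fin.card_Iic, Fin.val_rev]; omega
    _ ≤ _ := card_le_card fun j hj => by
        obtain ⟨k, hk, rfl⟩ := mem_image.1 hj
        exact mem_filter.2 ⟨mem_univ _, Tuple.monotone_sort f (mem_Iic.1 hk)⟩

lemma sortDesc_last_le (f : Fin N → ℝ) (hN : 0 < N) (j : Fin N) :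
    sortDesc f ⟨N - 1, by omega⟩ ≤ f j := by
  have h0 : (⟨N - 1, by omega⟩ : Fin N).rev = ⟨0, hN⟩ := by ext; simp; omega
  simpa [sortDesc, h0] using
    Tuple.monotone_sort f (show (⟨0, hN⟩ : Fin N) ≤ (Tuple.sort f).symm j from Nat.zero_le _)

end SortDesc

section Interlacing

variable {ι : Type*} [Fintype ι] [DecidableEq ι] {A B : Matrix ι ι ℝ} {N : ℕ}

theorem sortDesc_eigenvalues_le_of_quadForm_le_on (hA : A.IsHermitian) (hB : B.IsHermitian)
    (e : Fin N ≃ ι) {W : Submodule ℝ (EuclideanSpace ℝ ι)}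
    (hW : ∀ x ∈ W, quadForm A x ≤ quadForm B x) {i j : Fin N}
    (hij : i.val + N ≤ j.val + finrank ℝ W) :
    sortDesc (hA.eigenvalues ∘ e) j ≤ sortDesc (hB.eigenvalues ∘ e) i := by
  set fA := hA.eigenvalues ∘ e
  set fB := hB.eigenvalues ∘ e
  refine le_of_quadForm_le_on hA hB hW
    (s := ({k | sortDesc fA j ≤ fA k} : Finset (Fin N)).map e.toEmbedding)
    (t := ({k | fB k ≤ sortDesc fB i} : Finset (Fin N)).map e.toEmbedding) ?_ ?_ ?_
  · intro a ha
    obtain ⟨k, hk, rfl⟩ := mem_map.1 ha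
    exact (mem_filter.1 hk).2
  · intro a ha
    obtain ⟨k, hk, rfl⟩ := mem_map.1 ha
    exact (mem_filter.1 hk).2
  · rw [card_map, card_map, (Fintype.card_congr e.symm).trans (Fintype.card_fin N)]
    have := le_card_filter_sortDesc_le fA j
    have := le_card_filter_le_sortDesc fB i
    omega

variable (hA : A.IsHermitian) (hB : B.IsHermitian) {w : ι → ℝ} (hAB : B = A + vecMulVec w w)
  (e : Fin N ≃ ι)
include hAB

theorem sortDesc_eigenvalues_le_of_eq_add_vecMulVec (i : Fin N) :
    sortDesc (hA.eigenvalues ∘ e) i ≤ sortDesc (hB.eigenvalues ∘ e) i := by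
  refine sortDesc_eigenvalues_le_of_quadForm_le_on hA hB e (W := ⊤) (fun x _ => ?_) ?_
  · rw [hAB, quadForm_add_vecMulVec]
    exact le_add_of_nonneg_right (sq_nonneg _)
  · rw [finrank_top, finrank_euclideanSpace, (Fintype.card_congr e.symm).trans (Fintype.card_fin N)]

theorem sortDesc_eigenvalues_succ_le_of_eq_add_vecMulVec (i : Fin N) (hi : i.val + 1 < N) :
    sortDesc (hB.eigenvalues ∘ e) ⟨i.val + 1, hi⟩ ≤ sortDesc (hA.eigenvalues ∘ e) i := by
  refine sortDesc_eigenvalues_le_of_quadForm_le_on hB hA e (W := (ℝ ∙ toLp 2 w)ᗮ)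
    (fun x hx => ?_) ?_
  · rw [Submodule.mem_orthogonal_singleton_iff_inner_right,
      EuclideanSpace.inner_eq_star_dotProduct, star_trivial, dotProduct_comm] at hx
    rw [hAB, quadForm_add_vecMulVec]
    simp [hx]
  · have := finrank_orthogonal_span_singleton_ge (toLp 2 w)
    rw [(Fintype.card_congr e.symm).trans (Fintype.card_fin N)] at this
    dsimp only
    omega

end Interlacing

section WeightedLaplacian

variable {ι : Type*} [Fintype ι] [DecidableEq ι]

def weightedLaplacian (M : Matrix ι ι ℝ) : Matrix ι ι ℝ := diagonal (M *ᵥ 1) - M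

lemma weightedLaplacian_mulVec_one (M : Matrix ι ι ℝ) : weightedLaplacian M *ᵥ 1 = 0 := by
  ext i
  simp [weightedLaplacian, sub_mulVec, mulVec_diagonal]

lemma weightedLaplacian_add (M M' : Matrix ι ι ℝ) :
    weightedLaplacian (M + M') = weightedLaplacian M + weightedLaplacian M' := by
  rw [weightedLaplacian, weightedLaplacian, weightedLaplacian, add_mulVec,
    show diagonal (M *ᵥ 1 + M' *ᵥ 1) = diagonal (M *ᵥ 1) + diagonal (M' *ᵥ 1) from
      (diagonal_add _ _).symm]
  abel

lemma weightedLaplacian_single_add_single {p q : ι} (hpq : p ≠ q) :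
    weightedLaplacian (single p q 1 + single q p 1)
      = vecMulVec (Pi.single p 1 - Pi.single q 1) (Pi.single p 1 - Pi.single q 1) := by
  ext i j
  simp only [weightedLaplacian, Matrix.sub_apply, diagonal_apply, add_mulVec, Pi.add_apply,
    Matrix.add_apply, vecMulVec_apply, Pi.sub_apply, single_mulVec, single_apply, Pi.single_apply,
    Function.update_apply, Pi.one_apply, Pi.zero_apply, mul_one]
  by_cases hip : i = p <;> by_cases hiq : i = q <;> by_cases hjp : j = p <;>
    by_cases hjq : j = q <;> subst_vars <;> simp_all [eq_comm]

lemma two_mul_dotProduct_weightedLaplacian_mulVec {M : Matrix ι ι ℝ} (hM : M.IsHermitian)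
    (x : ι → ℝ) :
    2 * (x ⬝ᵥ weightedLaplacian M *ᵥ x) = ∑ i, ∑ j, M i j * (x i - x j) ^ 2 := by
  have hsymm : ∀ i j, M j i = M i j := fun i j => by simpa using congrFun (congrFun hM.eq i) j
  have hswap : ∑ i, ∑ j, M i j * x j ^ 2 = ∑ i, ∑ j, M i j * x i ^ 2 := by
    rw [Finset.sum_comm]
    exact Finset.sum_congr rfl fun i _ => Finset.sum_congr rfl fun j _ => by rw [hsymm]
  have hL : x ⬝ᵥ weightedLaplacian M *ᵥ x
      = ∑ i, ∑ j, M i j * x i ^ 2 - ∑ i, ∑ j, M i j * x i * x j := by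
    rw [weightedLaplacian, sub_mulVec, dotProduct_sub]
    congr 1
    · simp only [dotProduct, mulVec_diagonal]
      simp only [mulVec, dotProduct, Pi.one_apply, mul_one, Finset.sum_mul, Finset.mul_sum]
      exact Finset.sum_congr rfl fun i _ => Finset.sum_congr rfl fun j _ => by ring
    · simp only [dotProduct, mulVec, Finset.mul_sum]
      exact Finset.sum_congr rfl fun i _ => Finset.sum_congr rfl fun j _ => by ring
  calc 2 * (x ⬝ᵥ weightedLaplacian M *ᵥ x)
      = ∑ i, ∑ j, M i j * x i ^ 2 - 2 * ∑ i, ∑ j, M i j * x i * x j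
        + ∑ i, ∑ j, M i j * x j ^ 2 := by rw [hL, hswap]; ring
    _ = ∑ i, ∑ j, M i j * (x i - x j) ^ 2 := by
      simp only [Finset.mul_sum, ← Finset.sum_sub_distrib, ← Finset.sum_add_distrib]
      exact Finset.sum_congr rfl fun i _ => Finset.sum_congr rfl fun j _ => by ring

lemma posSemidef_weightedLaplacian {M : Matrix ι ι ℝ} (hM : M.IsHermitian)
    (hM0 : ∀ i j, 0 ≤ M i j) : (weightedLaplacian M).PosSemidef := by
  refine .of_dotProduct_mulVec_nonneg ((isHermitian_diagonal _).sub hM) fun x => ?_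
  have := two_mul_dotProduct_weightedLaplacian_mulVec hM x
  have : 0 ≤ ∑ i, ∑ j, M i j * (x i - x j) ^ 2 :=
    Finset.sum_nonneg fun i _ => Finset.sum_nonneg fun j _ => mul_nonneg (hM0 i j) (sq_nonneg _)
  rw [star_trivial]
  linarith

end WeightedLaplacian

section MixedGraph

lemma Au_mulVec_one (E : V → V → ℕ) : Au E *ᵥ 1 = fun v => ((dU E v : ℕ) : ℝ) := by
  ext v
  have hoff : ∀ u ∈ ({u | u ≠ v} : Finset V), Au E v u * (1 : V → ℝ) u = E v u := fun u hu => by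
    simp [Au, Ne.symm (mem_filter.1 hu).2]
  rw [mulVec, dotProduct, ← Finset.add_sum_erase _ _ (mem_univ v), ← Finset.filter_ne',
    Finset.sum_congr rfl hoff, dU]
  simp only [Au, of_apply, ↓reduceIte, Pi.one_apply, mul_one, Nat.cast_add, Nat.cast_mul,
    Nat.cast_ofNat, Nat.cast_sum]
  ring

lemma intAdj_mulVec_one (E A : V → V → ℕ) :
    intAdj E A *ᵥ 1 = Sum.elim (fun v => ((dU E v + dOut A v : ℕ) : ℝ))
      (fun v => ((dU E v + dIn A v : ℕ) : ℝ)) := by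
  have hB : Bm A *ᵥ 1 = fun v => ((dOut A v : ℕ) : ℝ) := by
    ext v; simp [Bm, dOut, mulVec, dotProduct]
  have hBt : (Bm A)ᵀ *ᵥ 1 = fun v => ((dIn A v : ℕ) : ℝ) := by
    ext v; simp [Bm, dIn, mulVec, dotProduct]
  ext (v | v)
  · simp [intAdj, fromBlocks_mulVec, Au_mulVec_one, hB]
  · simp [intAdj, fromBlocks_mulVec, Au_mulVec_one, hBt, add_comm]

lemma intLap_eq_weightedLaplacian (E A : V → V → ℕ) :
    intLap E A = weightedLaplacian (intAdj E A) := by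
  rw [intLap, intDeg, weightedLaplacian, intAdj_mulVec_one]

lemma intAdj_nonneg (E A : V → V → ℕ) (i j : V ⊕ V) : 0 ≤ intAdj E A i j := by
  rcases i with u | u <;> rcases j with v | v <;> simp only [intAdj, Au, Bm, fromBlocks_apply₁₁,
    fromBlocks_apply₁₂, fromBlocks_apply₂₁, fromBlocks_apply₂₂, transpose_apply, of_apply] <;>
    positivity

lemma posSemidef_intLap (E A : V → V → ℕ) (hE : ∀ u v, E u v = E v u) :
    (intLap E A).PosSemidef :=
  intLap_eq_weightedLaplacian E A ▸
    posSemidef_weightedLaplacian (intAdj_isHermitian E A hE) (intAdj_nonneg E A)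

omit [Fintype V] in
lemma Bm_eq_add_single {A A' : V → V → ℕ} {u₀ v₀ : V} (ha : A u₀ v₀ = 1)
    (hA' : ∀ u v, A' u v = if u = u₀ ∧ v = v₀ then 0 else A u v) :
    Bm A = Bm A' + single u₀ v₀ 1 := by
  ext u v
  by_cases h : u = u₀ ∧ v = v₀
  · obtain ⟨rfl, rfl⟩ := h
    simp [Bm, hA', ha]
  · have h' : ¬(u₀ = u ∧ v₀ = v) := fun ⟨h₁, h₂⟩ => h ⟨h₁.symm, h₂.symm⟩
    simp [Bm, hA', h, h']

lemma intAdj_eq_add_single (E : V → V → ℕ) {A A' : V → V → ℕ} {u₀ v₀ : V} (ha : A u₀ v₀ = 1)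
    (hA' : ∀ u v, A' u v = if u = u₀ ∧ v = v₀ then 0 else A u v) :
    intAdj E A = intAdj E A' + (single (.inl u₀) (.inr v₀) 1 + single (.inr v₀) (.inl u₀) 1) := by
  ext (u | u) (v | v) <;> simp [intAdj, Bm_eq_add_single ha hA', single_apply, and_comm]

lemma intLap_eq_add_vecMulVec (E : V → V → ℕ) {A A' : V → V → ℕ} {u₀ v₀ : V} (ha : A u₀ v₀ = 1)
    (hA' : ∀ u v, A' u v = if u = u₀ ∧ v = v₀ then 0 else A u v) :
    intLap E A = intLap E A' + vecMulVec (Pi.single (.inl u₀) 1 - Pi.single (.inr v₀) 1)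
      (Pi.single (.inl u₀) 1 - Pi.single (.inr v₀) 1) := by
  rw [intLap_eq_weightedLaplacian, intLap_eq_weightedLaplacian, intAdj_eq_add_single E ha hA',
    weightedLaplacian_add, weightedLaplacian_single_add_single Sum.inl_ne_inr]

lemma nuT_last_eq_zero {n : ℕ} (E A : Fin n → Fin n → ℕ) (hE : ∀ u v, E u v = E v u)
    (hn : 0 < n + n) : nuT E A hE ⟨n + n - 1, by omega⟩ = 0 := by
  have : Nonempty (Fin n) := ⟨⟨0, by omega⟩⟩
  obtain ⟨j, hj⟩ := (intLap_isHermitian E A hE).exists_eigenvalues_eq_zero one_ne_zero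
    ((intLap_eq_weightedLaplacian E A).symm ▸ weightedLaplacian_mulVec_one _)
  refine le_antisymm ?_ ((posSemidef_intLap E A hE).eigenvalues_nonneg _)
  calc nuT E A hE _ ≤ _ := sortDesc_last_le _ hn (finSumFinEquiv j)
    _ = 0 := by simpa using hj

end MixedGraph

/-- interlacing of Laplacian eigenvalues upon deleting one arc of a simple
mixed graph: `0 = ν₂ₙ(H) = ν₂ₙ(G)` and `ν_{i+1}(G) ≤ ν_i(H) ≤ ν_i(G)` for `i = 1,…,2n−1`. -/
theorem stmt3 (n : ℕ) (E A A' : Fin n → Fin n → ℕ) (hE : ∀ u v, E u v = E v u)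
    (u₀ v₀ : Fin n) (ha : A u₀ v₀ = 1)
    (hA' : ∀ u v, A' u v = if u = u₀ ∧ v = v₀ then 0 else A u v) :
    nuT E A' hE ⟨n + n - 1, by have := u₀.pos; omega⟩ = 0 ∧
    nuT E A hE ⟨n + n - 1, by have := u₀.pos; omega⟩ = 0 ∧
    (∀ i : Fin (n + n), (h : (i : ℕ) + 1 < n + n) →
      nuT E A hE ⟨(i : ℕ) + 1, h⟩ ≤ nuT E A' hE i ∧ nuT E A' hE i ≤ nuT E A hE i) := by
  have hn : 0 < n + n := by have := u₀.pos; omega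
  have hdecomp := intLap_eq_add_vecMulVec E ha hA'
  refine ⟨nuT_last_eq_zero E A' hE hn, nuT_last_eq_zero E A hE hn, fun i h => ⟨?_, ?_⟩⟩
  · exact sortDesc_eigenvalues_succ_le_of_eq_add_vecMulVec _ _ hdecomp _ i h
  · exact sortDesc_eigenvalues_le_of_eq_add_vecMulVec _ _ hdecomp _ i
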